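/- For every seminormed ring A the topological spectrum TopSpec(A) is a quasi-compact topological space. -/

import Mathlib

open Filter Topology

/-- A bounded power-multiplicative (nonarchimedean, submultiplicative) ring seminorm
on a seminormed commutative ring. -/
structure IsBddPowMulSeminorm {A : Type*} [SeminormedCommRing A] (φ : A → ℝ) : Prop where
  nonneg : ∀ f, 0 ≤ φ f
  map_zero : φ 0 = 0
  map_one : φ 1 = 1
  map_neg : ∀ f, φ (-f) = φ f
  nonarch : ∀ f g, φ (f + g) ≤ max (φ f) (φ g)
  submul : ∀ f g, φ (f * g) ≤ φ f * φ g
  pow_mul : ∀ f, ∀ n : ℕ, 1 ≤ n → φ (f ^ n) = φ f ^ n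
  bounded : ∃ C > 0, ∀ f, φ f ≤ C * ‖f‖

/-- An ideal is spectrally reduced if it is the kernel of some bounded
power-multiplicative seminorm. -/
def IsSpectrallyReduced {A : Type*} [SeminormedCommRing A] (I : Ideal A) : Prop :=
  ∃ φ : A → ℝ, IsBddPowMulSeminorm φ ∧ ∀ f, f ∈ I ↔ φ f = 0

/-- The topological spectrum: the subspace of `Spec A` consisting of the spectrally
reduced prime ideals, with the topology induced from the Zariski topology. -/
abbrev TopSpec (A : Type*) [SeminormedCommRing A] : Type _ :=
  {p : PrimeSpectrum A // IsSpectrallyReduced p.asIdeal}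

/-!
A bounded power-multiplicative seminorm `φ` dominates a bounded *multiplicative* one: by Zorn's
lemma (infima of chains are again bounded and power-multiplicative) there is a minimal `ψ ≤ φ`,
and a minimal `ψ` is multiplicative, since otherwise `seminormFromConst' c ψ` would be strictly
smaller. Multiplicative seminorms are bounded by `‖·‖`, so they form a closed subset of
`∏ f, [0, ‖f‖]`, compact by Tychonoff, and their kernels are spectrally reduced primes. Thus every
point of `TopSpec A` specializes to a point of the image of this compact set under the continuous
kernel map, and since open sets are stable under generalization, a finite subcover of that image
covers all of `TopSpec A`.
-/

theorem IsCompact.compactSpace_of_forall_specializes {X : Type*} [TopologicalSpace X]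
    {K : Set X} (hK : IsCompact K) (h : ∀ x, ∃ y ∈ K, x ⤳ y) : CompactSpace X := by
  refine ⟨isCompact_of_finite_subcover fun U hU hcov => ?_⟩
  obtain ⟨t, ht⟩ := hK.elim_finite_subcover U hU (K.subset_univ.trans hcov)
  refine ⟨t, fun x _ => ?_⟩
  obtain ⟨y, hyK, hxy⟩ := h x
  exact hxy.mem_open (isOpen_biUnion fun i _ => hU i) (ht hyK)

namespace IsBddPowMulSeminorm

variable {A : Type*} [SeminormedCommRing A] {φ : A → ℝ}

theorem isPowMul (hφ : IsBddPowMulSeminorm φ) : IsPowMul φ :=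
  fun f _ hn => hφ.pow_mul f _ hn

theorem le_norm (hφ : IsBddPowMulSeminorm φ) (f : A) : φ f ≤ ‖f‖ :=
  contraction_of_isPowMul_of_boundedWrt (SeminormedRing.toRingSeminorm A) hφ.isPowMul
    (f := RingHom.id A) hφ.bounded f

def toRingSeminorm (hφ : IsBddPowMulSeminorm φ) : RingSeminorm A where
  toFun := φ
  map_zero' := hφ.map_zero
  add_le' f g := (hφ.nonarch f g).trans <|
    max_le (le_add_of_nonneg_right (hφ.nonneg g)) (le_add_of_nonneg_left (hφ.nonneg f))
  neg' := hφ.map_neg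
  mul_le' := hφ.submul

section Directed

variable {ι : Type*} {φ : ι → A → ℝ}

theorem bddBelow_range_apply (hφ : ∀ i, IsBddPowMulSeminorm (φ i)) (f : A) :
    BddBelow (Set.range fun i => φ i f) :=
  ⟨0, Set.forall_mem_range.2 fun i => (hφ i).nonneg f⟩

variable [Nonempty ι]

theorem ciInf_apply_nonneg (hφ : ∀ i, IsBddPowMulSeminorm (φ i)) (f : A) : 0 ≤ ⨅ i, φ i f :=
  le_ciInf fun i => (hφ i).nonneg f

theorem ciInf_apply_add_le (hφ : ∀ i, IsBddPowMulSeminorm (φ i)) (hd : Directed (· ≥ ·) φ)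
    (f g : A) :
    ⨅ i, φ i (f + g) ≤ max (⨅ i, φ i f) (⨅ i, φ i g) := by
  rw [Monotone.map_ciInf_of_continuousAt (f := (max · _)) (by fun_prop : Continuous _).continuousAt
    (fun _ _ h => max_le_max_right _ h) (bddBelow_range_apply hφ f)]
  refine le_ciInf fun i => ?_
  rw [Monotone.map_ciInf_of_continuousAt (f := max _) (by fun_prop : Continuous _).continuousAt
    (fun _ _ h => max_le_max_left _ h) (bddBelow_range_apply hφ g)]
  refine le_ciInf fun j => ?_
  obtain ⟨k, hki, hkj⟩ := hd i j
  calc ⨅ i, φ i (f + g) ≤ φ k (f + g) := ciInf_le (bddBelow_range_apply hφ _) k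
    _ ≤ max (φ k f) (φ k g) := (hφ k).nonarch f g
    _ ≤ max (φ i f) (φ j g) := max_le_max (hki f) (hkj g)

theorem ciInf_apply_mul_le (hφ : ∀ i, IsBddPowMulSeminorm (φ i)) (hd : Directed (· ≥ ·) φ)
    (f g : A) :
    ⨅ i, φ i (f * g) ≤ (⨅ i, φ i f) * ⨅ i, φ i g := by
  rw [Real.iInf_mul_of_nonneg (ciInf_apply_nonneg hφ g)]
  refine le_ciInf fun i => ?_
  rw [Real.mul_iInf_of_nonneg ((hφ i).nonneg f)]
  refine le_ciInf fun j => ?_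
  obtain ⟨k, hki, hkj⟩ := hd i j
  calc ⨅ i, φ i (f * g) ≤ φ k (f * g) := ciInf_le (bddBelow_range_apply hφ _) k
    _ ≤ φ k f * φ k g := (hφ k).submul f g
    _ ≤ φ i f * φ j g := mul_le_mul (hki f) (hkj g) ((hφ k).nonneg g) ((hφ i).nonneg f)

theorem ciInf (hφ : ∀ i, IsBddPowMulSeminorm (φ i)) (hd : Directed (· ≥ ·) φ) :
    IsBddPowMulSeminorm fun f => ⨅ i, φ i f where
  nonneg := ciInf_apply_nonneg hφ
  map_zero := by simp only [fun i => (hφ i).map_zero, ciInf_const]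
  map_one := by simp only [fun i => (hφ i).map_one, ciInf_const]
  map_neg f := by simp only [fun i => (hφ i).map_neg f]
  nonarch := ciInf_apply_add_le hφ hd
  submul := ciInf_apply_mul_le hφ hd
  pow_mul f n hn := by
    refine le_antisymm ?_ (le_ciInf fun i => ?_)
    · induction n, hn using Nat.le_induction with
      | base => simp only [pow_one, le_refl]
      | succ n hn ih =>
        rw [pow_succ, pow_succ]
        exact (ciInf_apply_mul_le hφ hd _ f).trans
          (mul_le_mul_of_nonneg_right ih (ciInf_apply_nonneg hφ f))
    · rw [(hφ i).pow_mul f n hn]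
      exact pow_le_pow_left₀ (ciInf_apply_nonneg hφ f)
        (ciInf_le (bddBelow_range_apply hφ f) i) n
  bounded := by
    obtain ⟨i₀⟩ := ‹Nonempty ι›
    obtain ⟨C, hC, hle⟩ := (hφ i₀).bounded
    exact ⟨C, hC, fun f => (ciInf_le (bddBelow_range_apply hφ f) i₀).trans (hle f)⟩

end Directed

theorem exists_minimal_le (hφ : IsBddPowMulSeminorm φ) :
    ∃ ψ ≤ φ, Minimal IsBddPowMulSeminorm ψ := by
  obtain ⟨ψ, hφψ, hψ⟩ := zorn_le_nonempty₀ (α := (A → ℝ)ᵒᵈ)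
    {ψ | IsBddPowMulSeminorm (OrderDual.ofDual ψ)}
    (fun c hc hchain χ hχ => by
      have : Nonempty c := ⟨⟨χ, hχ⟩⟩
      exact ⟨_, ciInf (fun i : c => hc i.2) hchain.directedOn.directed_val,
        fun ψ hψ f => ciInf_le (bddBelow_range_apply (fun i : c => hc i.2) f) ⟨ψ, hψ⟩⟩)
    (OrderDual.toDual φ) hφ
  exact ⟨OrderDual.ofDual ψ, hφψ, hψ.of_dual⟩

theorem seminormFromConst (hφ : IsBddPowMulSeminorm φ) {c : A} (hc : φ c ≠ 0) :
    IsBddPowMulSeminorm (seminormFromConst' c hφ.toRingSeminorm) := by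
  have h1 : hφ.toRingSeminorm 1 ≤ 1 := hφ.map_one.le
  set χ := _root_.seminormFromConst h1 hc hφ.isPowMul
  obtain ⟨C, hC, hle⟩ := hφ.bounded
  exact
  { nonneg := apply_nonneg χ
    map_zero := _root_.map_zero χ
    map_one := seminormFromConst_one h1 hc hφ.isPowMul
    map_neg := map_neg_eq_map χ
    nonarch := seminormFromConst_isNonarchimedean h1 hc hφ.isPowMul hφ.nonarch
    submul := map_mul_le_mul χ
    pow_mul f _ hn := seminormFromConst_isPowMul h1 hc hφ.isPowMul f hn
    bounded := ⟨C, hC, fun f =>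
      (seminormFromConst_le_seminorm h1 hc hφ.isPowMul f).trans (hle f)⟩ }

theorem map_mul_of_minimal (hφ : Minimal IsBddPowMulSeminorm φ) (f g : A) :
    φ (f * g) = φ f * φ g := by
  by_cases hf : φ f = 0
  · rw [hf, zero_mul]
    refine le_antisymm ?_ (hφ.prop.nonneg _)
    simpa only [hf, zero_mul] using hφ.prop.submul f g
  · have h1 : hφ.prop.toRingSeminorm 1 ≤ 1 := hφ.prop.map_one.le
    have hχ : seminormFromConst' f hφ.prop.toRingSeminorm = φ :=
      hφ.eq_of_le (hφ.prop.seminormFromConst hf)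
        (seminormFromConst_le_seminorm h1 hf hφ.prop.isPowMul)
    rw [← hχ]
    exact seminormFromConst_const_mul h1 hf hφ.prop.isPowMul g

end IsBddPowMulSeminorm

open scoped NNReal

section Berkovich

variable {A : Type*} [SeminormedCommRing A]

/-- Boundedness is imposed as `ψ ≤ ‖·‖`, a closed condition on `A → ℝ`, which for
power-multiplicative `ψ` is equivalent to `ψ ≤ C‖·‖` by `IsBddPowMulSeminorm.le_norm`. -/
structure IsBerkovichPoint (ψ : A → ℝ) : Prop where
  nonneg : ∀ f, 0 ≤ ψ f
  le_norm : ∀ f, ψ f ≤ ‖f‖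
  map_one : ψ 1 = 1
  map_neg : ∀ f, ψ (-f) = ψ f
  nonarch : ∀ f g, ψ (f + g) ≤ max (ψ f) (ψ g)
  map_mul : ∀ f g, ψ (f * g) = ψ f * ψ g

variable (A) in
def berkovichSpectrum : Set (A → ℝ) := {ψ | IsBerkovichPoint ψ}

theorem isCompact_berkovichSpectrum : IsCompact (berkovichSpectrum A) := by
  have hsub : berkovichSpectrum A ⊆ Set.univ.pi fun f => Set.Icc 0 ‖f‖ :=
    fun ψ hψ f _ => ⟨hψ.nonneg f, hψ.le_norm f⟩
  refine (isCompact_univ_pi fun f => isCompact_Icc).of_isClosed_subset ?_ hsub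
  have heq : berkovichSpectrum A = (⋂ f, {ψ : A → ℝ | 0 ≤ ψ f}) ∩ (⋂ f, {ψ | ψ f ≤ ‖f‖}) ∩
      {ψ | ψ 1 = 1} ∩ (⋂ f, {ψ | ψ (-f) = ψ f}) ∩
      (⋂ f, ⋂ g, {ψ | ψ (f + g) ≤ max (ψ f) (ψ g)}) ∩
      ⋂ f, ⋂ g, {ψ | ψ (f * g) = ψ f * ψ g} := by
    ext ψ
    simp only [berkovichSpectrum, Set.mem_inter_iff, Set.mem_iInter]
    exact ⟨fun h => ⟨⟨⟨⟨⟨h.1, h.2⟩, h.3⟩, h.4⟩, h.5⟩, h.6⟩,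
      fun ⟨⟨⟨⟨⟨h₁, h₂⟩, h₃⟩, h₄⟩, h₅⟩, h₆⟩ => ⟨h₁, h₂, h₃, h₄, h₅, h₆⟩⟩
  rw [heq]
  repeat' apply IsClosed.inter
  all_goals
    repeat' refine isClosed_iInter fun _ => ?_
    first
      | exact isClosed_le (by fun_prop) (by fun_prop)
      | exact isClosed_eq (by fun_prop) (by fun_prop)

namespace IsBerkovichPoint

variable {ψ : A → ℝ}

theorem isBddPowMulSeminorm (hψ : IsBerkovichPoint ψ) : IsBddPowMulSeminorm ψ where
  nonneg := hψ.nonneg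
  map_zero := le_antisymm (norm_zero (E := A) ▸ hψ.le_norm 0) (hψ.nonneg 0)
  map_one := hψ.map_one
  map_neg := hψ.map_neg
  nonarch := hψ.nonarch
  submul f g := (hψ.map_mul f g).le
  pow_mul f n _ := map_pow (⟨⟨ψ, hψ.map_one⟩, hψ.map_mul⟩ : A →* ℝ) f n
  bounded := ⟨1, one_pos, fun f => (one_mul ‖f‖).symm ▸ hψ.le_norm f⟩

noncomputable def valuation (hψ : IsBerkovichPoint ψ) : Valuation A ℝ≥0 where
  toFun f := ⟨ψ f, hψ.nonneg f⟩
  map_zero' := NNReal.coe_injective hψ.isBddPowMulSeminorm.map_zero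
  map_one' := NNReal.coe_injective hψ.map_one
  map_mul' f g := NNReal.coe_injective (hψ.map_mul f g)
  map_add_le_max' f g := hψ.nonarch f g

theorem mem_supp_valuation_iff (hψ : IsBerkovichPoint ψ) (f : A) :
    f ∈ hψ.valuation.supp ↔ ψ f = 0 :=
  hψ.valuation.mem_supp_iff f |>.trans NNReal.coe_eq_zero.symm

end IsBerkovichPoint

variable (A) in
noncomputable def kerPoint (ψ : berkovichSpectrum A) : TopSpec A :=
  ⟨⟨ψ.2.valuation.supp, inferInstance⟩,
    ψ.1, ψ.2.isBddPowMulSeminorm, ψ.2.mem_supp_valuation_iff⟩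

theorem continuous_kerPoint : Continuous (kerPoint A) := by
  refine Continuous.subtype_mk ?_ _
  rw [PrimeSpectrum.isTopologicalBasis_basic_opens.continuous_iff]
  rintro _ ⟨r, rfl⟩
  convert isOpen_compl_singleton.preimage
    ((continuous_apply r).comp (continuous_subtype_val (p := (· ∈ berkovichSpectrum A)))) using 1
  ext ψ
  exact (PrimeSpectrum.mem_basicOpen _ _).trans (ψ.2.mem_supp_valuation_iff r).not

theorem exists_specializes_kerPoint (x : TopSpec A) : ∃ ψ, x ⤳ kerPoint A ψ := by
  obtain ⟨φ, hφ, hker⟩ := x.2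
  obtain ⟨ψ, hψφ, hψ⟩ := hφ.exists_minimal_le
  have hψB : IsBerkovichPoint ψ :=
    { hψ.prop with
      le_norm := hψ.prop.le_norm
      map_mul := IsBddPowMulSeminorm.map_mul_of_minimal hψ }
  refine ⟨⟨ψ, hψB⟩, (subtype_specializes_iff _ _).2 ?_⟩
  rw [← PrimeSpectrum.le_iff_specializes]
  intro f hf
  exact (hψB.mem_supp_valuation_iff f).2 <|
    le_antisymm (((hker f).1 hf) ▸ hψφ f) (hψ.prop.nonneg f)

end Berkovich

theorem topSpec_compactSpace {A : Type*} [SeminormedCommRing A] :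
    CompactSpace (TopSpec A) := by
  have := isCompact_iff_compactSpace.mp (isCompact_berkovichSpectrum (A := A))
  refine (isCompact_range continuous_kerPoint).compactSpace_of_forall_specializes fun x => ?_
  obtain ⟨ψ, hψ⟩ := exists_specializes_kerPoint x
  exact ⟨_, Set.mem_range_self ψ, hψ⟩
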